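/- For solutions of the Cucker-Smale system with kernel bounded above by r̄, the kinetic energy m₂(t) = ∑_{i=1}^N |v_i(t)|² satisfies the lower bound m₂(t) ≥ m₂(0) e^{−2λ r̄ t} + (|m₁(0)|²/N)(1 − e^{−2λ r̄ t}), where m₁(0) = ∑_{i=1}^N v_i(0). -/

import Mathlib

open Real Finset

open RealInnerProductSpace

/-!
Symmetry of the kernel makes the momentum `∑ i, v i` a conserved quantity and turns the
derivative of the energy `m₂ = ∑ i, ‖v i‖²` into `-(λ/N) ∑ i j, r_ij ‖v i - v j‖²`. Since
`r ≤ r̄` and `∑ i j, ‖v i - v j‖² = 2 N m₂ - 2 ‖m₁‖²`, this gives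
`m₂' ≥ 2 λ r̄ (‖m₁(0)‖² / N - m₂)`, and then `(m₂ - ‖m₁(0)‖² / N) e^{2 λ r̄ t}` is monotone.
-/

theorem relaxation_le_of_hasDerivAt {f f' : ℝ → ℝ} {k c : ℝ}
    (hf : ∀ t, HasDerivAt f (f' t) t) (hf' : ∀ t, k * (c - f t) ≤ f' t)
    {t : ℝ} (ht : 0 ≤ t) :
    f 0 * exp (-k * t) + c * (1 - exp (-k * t)) ≤ f t := by
  have hg : ∀ s, HasDerivAt (fun s => (f s - c) * exp (k * s))
      ((f' s + k * (f s - c)) * exp (k * s)) s := fun s => by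
    have hexp : HasDerivAt (fun s => exp (k * s)) (exp (k * s) * k) s := by
      simpa using ((hasDerivAt_id s).const_mul k).exp
    exact (((hf s).sub_const c).mul hexp).congr_deriv (by ring)
  have hmono : Monotone fun s => (f s - c) * exp (k * s) :=
    monotone_of_deriv_nonneg (fun s => (hg s).differentiableAt) fun s => by
      rw [(hg s).deriv]
      nlinarith [hf' s, exp_pos (k * s)]
  have h := hmono ht
  simp only [mul_zero, exp_zero, mul_one] at h
  have hexp : exp (k * t) * exp (-k * t) = 1 := by rw [← exp_add]; simp
  have := mul_le_mul_of_nonneg_right h (exp_pos (-k * t)).le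
  rw [mul_assoc, hexp] at this
  linarith

section Symmetrization

variable {ι E : Type*} [Fintype ι] [NormedAddCommGroup E] [InnerProductSpace ℝ E]
  {w : ι → ι → ℝ}

theorem sum_sum_smul_sub_eq_zero (hw : ∀ i j, w i j = w j i) (u : ι → E) :
    ∑ i, ∑ j, w i j • (u j - u i) = 0 := by
  have hswap : ∑ i, ∑ j, w i j • u j = ∑ i, ∑ j, w i j • u i := by
    rw [Finset.sum_comm]
    simp only [hw]
  simp only [smul_sub, Finset.sum_sub_distrib, hswap, sub_self]

theorem sum_inner_sum_smul_sub (hw : ∀ i j, w i j = w j i) (u : ι → E) :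
    ∑ i, ⟪∑ j, w i j • (u j - u i), u i⟫ = -(∑ i, ∑ j, w i j * ‖u i - u j‖ ^ 2) / 2 := by
  have hswap : ∑ i, ∑ j, w i j * ⟪u j - u i, u i⟫ = ∑ i, ∑ j, w i j * ⟪u i - u j, u j⟫ := by
    rw [Finset.sum_comm]
    simp only [hw]
  have hpair : ∀ i j, ⟪u j - u i, u i⟫ + ⟪u i - u j, u j⟫ = -‖u i - u j‖ ^ 2 := fun i j => by
    simp only [inner_sub_left, real_inner_self_eq_norm_sq, norm_sub_sq_real,
      real_inner_comm (u j) (u i)]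
    ring
  have h2 : 2 * ∑ i, ∑ j, w i j * ⟪u j - u i, u i⟫ = -∑ i, ∑ j, w i j * ‖u i - u j‖ ^ 2 := by
    rw [two_mul]
    nth_rewrite 2 [hswap]
    simp only [← Finset.sum_add_distrib, ← mul_add, hpair, ← Finset.sum_neg_distrib]
    simp
  simp only [sum_inner, real_inner_smul_left]
  linarith

theorem sum_sum_norm_sub_sq (u : ι → E) :
    ∑ i, ∑ j, ‖u i - u j‖ ^ 2 = 2 * Fintype.card ι * ∑ i, ‖u i‖ ^ 2 - 2 * ‖∑ i, u i‖ ^ 2 := by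
  have hinner : ∑ i, ∑ j, ⟪u i, u j⟫ = ‖∑ i, u i‖ ^ 2 := by
    rw [← real_inner_self_eq_norm_sq, sum_inner]
    simp only [inner_sum]
  simp only [norm_sub_sq_real, Finset.sum_sub_distrib, Finset.sum_add_distrib, ← Finset.mul_sum,
    hinner, Finset.sum_const, Finset.card_univ, nsmul_eq_mul]
  ring

theorem mul_sub_le_neg_sum_sum_mul_norm_sub_sq [Nonempty ι] {wbar : ℝ}
    (hw : ∀ i j, w i j ≤ wbar) (u : ι → E) :
    2 * Fintype.card ι * wbar * (‖∑ i, u i‖ ^ 2 / Fintype.card ι - ∑ i, ‖u i‖ ^ 2)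
      ≤ -∑ i, ∑ j, w i j * ‖u i - u j‖ ^ 2 := by
  have hle : ∑ i, ∑ j, w i j * ‖u i - u j‖ ^ 2 ≤ wbar * ∑ i, ∑ j, ‖u i - u j‖ ^ 2 := by
    simp only [Finset.mul_sum]
    gcongr with i _ j _
    exact hw i j
  have hcard : (Fintype.card ι : ℝ) ≠ 0 := Nat.cast_ne_zero.mpr Fintype.card_ne_zero
  rw [sum_sum_norm_sub_sq] at hle
  field_simp
  linarith

end Symmetrization

section Consensus

variable {ι E : Type*} [Fintype ι] [NormedAddCommGroup E] [InnerProductSpace ℝ E]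
  {w : ℝ → ι → ι → ℝ} {v : ι → ℝ → E}

theorem sum_eq_of_hasDerivAt_consensus (hw : ∀ t i j, w t i j = w t j i)
    (hv : ∀ i t, HasDerivAt (v i) (∑ j, w t i j • (v j t - v i t)) t) (s t : ℝ) :
    ∑ i, v i s = ∑ i, v i t := by
  have hderiv : ∀ t, HasDerivAt (fun t => ∑ i, v i t) 0 t := fun t => by
    simpa only [sum_sum_smul_sub_eq_zero (hw t)] using
      HasDerivAt.fun_sum fun i (_ : i ∈ Finset.univ) => hv i t
  exact is_const_of_deriv_eq_zero (fun t => (hderiv t).differentiableAt)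
    (fun t => (hderiv t).deriv) s t

theorem hasDerivAt_sum_norm_sq_consensus (hw : ∀ t i j, w t i j = w t j i)
    (hv : ∀ i t, HasDerivAt (v i) (∑ j, w t i j • (v j t - v i t)) t) (t : ℝ) :
    HasDerivAt (fun t => ∑ i, ‖v i t‖ ^ 2) (-∑ i, ∑ j, w t i j * ‖v i t - v j t‖ ^ 2) t := by
  have h := HasDerivAt.fun_sum fun i (_ : i ∈ Finset.univ) => (hv i t).norm_sq
  refine h.congr_deriv ?_
  have hcomm : ∀ i, ⟪v i t, ∑ j, w t i j • (v j t - v i t)⟫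
      = ⟪∑ j, w t i j • (v j t - v i t), v i t⟫ := fun i => real_inner_comm _ _
  rw [← Finset.mul_sum, Finset.sum_congr rfl fun i _ => hcomm i, sum_inner_sum_smul_sub (hw t)]
  ring

theorem consensus_energy_lower_bound [Nonempty ι] {wbar : ℝ} (hw : ∀ t i j, w t i j = w t j i)
    (hwbar : ∀ t i j, w t i j ≤ wbar)
    (hv : ∀ i t, HasDerivAt (v i) (∑ j, w t i j • (v j t - v i t)) t) {t : ℝ} (ht : 0 ≤ t) :
    (∑ i, ‖v i 0‖ ^ 2) * exp (-(2 * Fintype.card ι * wbar) * t)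
        + (‖∑ i, v i 0‖ ^ 2 / Fintype.card ι) * (1 - exp (-(2 * Fintype.card ι * wbar) * t))
      ≤ ∑ i, ‖v i t‖ ^ 2 :=
  relaxation_le_of_hasDerivAt (hasDerivAt_sum_norm_sq_consensus hw hv) (fun s => by
    rw [sum_eq_of_hasDerivAt_consensus hw hv 0 s]
    exact mul_sub_le_neg_sum_sum_mul_norm_sub_sq (hwbar s) (fun i => v i s)) ht

end Consensus

theorem cucker_smale_energy_lower_bound_general
    {d N : ℕ} (hN : 0 < N) (lam rbar : ℝ) (hlam : 0 < lam)
    (r : EuclideanSpace ℝ (Fin d) → EuclideanSpace ℝ (Fin d) → ℝ)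
    (hsymm : ∀ x y, r x y = r y x)
    (hr1 : ∀ x y, r x y ≤ rbar)
    (x v : Fin N → ℝ → EuclideanSpace ℝ (Fin d))
    (hv : ∀ i t, HasDerivAt (v i)
      ((lam / N) • ∑ j, r (x i t) (x j t) • (v j t - v i t)) t) :
    ∀ t, 0 ≤ t →
      (∑ i, ‖v i 0‖ ^ 2) * Real.exp (-2 * lam * rbar * t)
        + (‖∑ i, v i 0‖ ^ 2 / N) * (1 - Real.exp (-2 * lam * rbar * t))
      ≤ ∑ i, ‖v i t‖ ^ 2 := by
  intro t ht
  have : Nonempty (Fin N) := ⟨⟨0, hN⟩⟩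
  have hconsensus : ∀ i t, HasDerivAt (v i)
      (∑ j, (lam / N * r (x i t) (x j t)) • (v j t - v i t)) t := by
    simpa only [Finset.smul_sum, smul_smul] using hv
  have hrate : -(2 * N * (lam / N * rbar)) * t = -2 * lam * rbar * t := by
    field_simp
  have h := consensus_energy_lower_bound (w := fun t i j => lam / N * r (x i t) (x j t))
    (fun t i j => by simp only [hsymm])
    (fun t i j => mul_le_mul_of_nonneg_left (hr1 _ _) (div_nonneg hlam.le N.cast_nonneg))
    hconsensus ht
  rwa [Fintype.card_fin, hrate] at h

/-- Exponential-in-time lower bound on the kinetic energy for the Cucker-Smale system. -/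
theorem cucker_smale_energy_lower_bound
    {d N : ℕ} (hN : 0 < N) (lam rbar : ℝ) (hlam : 0 < lam) (hrbar : 0 < rbar)
    (r : EuclideanSpace ℝ (Fin d) → EuclideanSpace ℝ (Fin d) → ℝ)
    (hsymm : ∀ x y, r x y = r y x)
    (hr0 : ∀ x y, 0 ≤ r x y) (hr1 : ∀ x y, r x y ≤ rbar)
    (x v : Fin N → ℝ → EuclideanSpace ℝ (Fin d))
    (hx : ∀ i t, HasDerivAt (x i) (v i t) t)
    (hv : ∀ i t, HasDerivAt (v i)
      ((lam / N) • ∑ j, r (x i t) (x j t) • (v j t - v i t)) t) :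
    ∀ t, 0 ≤ t →
      (∑ i, ‖v i 0‖ ^ 2) * Real.exp (-2 * lam * rbar * t)
        + (‖∑ i, v i 0‖ ^ 2 / N) * (1 - Real.exp (-2 * lam * rbar * t))
      ≤ ∑ i, ‖v i t‖ ^ 2 :=
  cucker_smale_energy_lower_bound_general hN lam rbar hlam r hsymm hr1 x v hv
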